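/- arXiv:2208.01857 — 2 statements merged into one kernel-verified Lean document; each statement's English description precedes it below -/
import Mathlib

section
/- Let $x$ be a random vector with $\mathbb{E}[\|x\|^2 x x^\top] \preceq R^2 G$ where $G = \mathbb{E}[x x^\top]$, and let $\Sigma$ be a PSD matrix with $\Sigma \preceq \sigma^2 G$. Let $0 < \gamma < 1/R^2$ and define the recursion $C_0 = 0$, $C_{t} = C_{t-1} - \gamma(G C_{t-1} + C_{t-1} G) + \gamma^2 \mathbb{E}[x x^\top C_{t-1} x x^\top] + \gamma^2 \Sigma$. Then for every $t \geq 0$, $C_t \preceq \frac{\gamma \sigma^2}{1 - \gamma R^2} I$. -/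
/-!
A step of the recursion is `C ↦ 𝔼[(I - γ x xᵀ) C (I - γ x xᵀ)] + γ² Σ`. Conjugation preserves the
Loewner order, so `C ⪯ α I` gives `𝔼[(I - γ x xᵀ) C (I - γ x xᵀ)] ⪯ α 𝔼[(I - γ x xᵀ)²]
= α (I - 2γ G + γ² 𝔼[‖x‖² x xᵀ]) ⪯ α I - α γ (2 - γ R²) G`, and adding `γ² Σ ⪯ γ² σ² G` stays
below `α I` as soon as `γ σ² ≤ α (1 - γ R²)`, which is an equality for `α = γ σ² / (1 - γ R²)`.
-/

open MeasureTheory Matrix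

namespace Matrix

variable {n R : Type*} [Fintype n] [CommRing R]

lemma IsSymm.dotProduct_mulVec_comm {A : Matrix n n R} (hA : A.IsSymm) (u w : n → R) :
    u ⬝ᵥ A *ᵥ w = w ⬝ᵥ A *ᵥ u := by
  simpa only [hA.eq] using dotProduct_transpose_mulVec A u w

lemma IsSymm.dotProduct_sub_smul_mulVec_sub_smul {A : Matrix n n R} (hA : A.IsSymm)
    (v y : n → R) (c : R) :
    (v - c • y) ⬝ᵥ A *ᵥ (v - c • y) =
      v ⬝ᵥ A *ᵥ v - 2 * c * (y ⬝ᵥ A *ᵥ v) + c ^ 2 * (y ⬝ᵥ A *ᵥ y) := by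
  simp only [mulVec_sub, mulVec_smul, dotProduct_sub, sub_dotProduct, dotProduct_smul,
    smul_dotProduct, smul_eq_mul, hA.dotProduct_mulVec_comm v y]
  ring

lemma dotProduct_vecMulVec_mulVec (u y z w : n → R) :
    u ⬝ᵥ vecMulVec y z *ᵥ w = (u ⬝ᵥ y) * (z ⬝ᵥ w) := by
  rw [vecMulVec_mulVec, op_smul_eq_smul, dotProduct_smul, smul_eq_mul, mul_comm]

lemma dotProduct_of_mul_mul_mulVec (u y w : n → R) (s : R) :
    u ⬝ᵥ (of fun i j => y i * s * y j) *ᵥ w = s * ((u ⬝ᵥ y) * (y ⬝ᵥ w)) := by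
  have : (of fun i j => y i * s * y j) = s • vecMulVec y y := by
    ext i j
    simp only [of_apply, smul_apply, vecMulVec_apply, smul_eq_mul]
    ring
  rw [this, smul_mulVec, dotProduct_smul, smul_eq_mul, dotProduct_vecMulVec_mulVec]

end Matrix

section EntrywiseIntegral

variable {n Ω : Type*} [Fintype n] [MeasurableSpace Ω] {μ : Measure Ω}
  {F : Ω → Matrix n n ℝ}

lemma integrable_dotProduct_mulVec (hF : ∀ i j, Integrable (fun ω => F ω i j) μ)
    (u w : n → ℝ) : Integrable (fun ω => u ⬝ᵥ F ω *ᵥ w) μ := by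
  simp only [dot_mulVec_eq_sum_sum]
  exact integrable_finsetSum _ fun j _ => integrable_finsetSum _ fun i _ =>
    ((hF i j).const_mul (u i)).mul_const (w j)

lemma dotProduct_integral_mulVec (hF : ∀ i j, Integrable (fun ω => F ω i j) μ)
    (u w : n → ℝ) :
    u ⬝ᵥ (of fun i j => ∫ ω, F ω i j ∂μ) *ᵥ w = ∫ ω, u ⬝ᵥ F ω *ᵥ w ∂μ := by
  simp only [dot_mulVec_eq_sum_sum, of_apply]
  rw [integral_finsetSum _ fun j _ => integrable_finsetSum _ fun i _ =>
    ((hF i j).const_mul (u i)).mul_const (w j)]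
  refine Finset.sum_congr rfl fun j _ => ?_
  rw [integral_finsetSum _ fun i _ => ((hF i j).const_mul (u i)).mul_const (w j)]
  refine Finset.sum_congr rfl fun i _ => ?_
  rw [integral_mul_const, integral_const_mul]

end EntrywiseIntegral

noncomputable section SGD

variable {n Ω : Type*} [MeasurableSpace Ω] (μ : Measure Ω) (x : Ω → n → ℝ)

def secondMoment : Matrix n n ℝ :=
  of fun i j => ∫ ω, x ω i * x ω j ∂μ

lemma isHermitian_secondMoment : (secondMoment μ x).IsHermitian :=
  IsHermitian.ext fun i j => by
    simp only [secondMoment, of_apply, star_trivial, mul_comm]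

variable [Fintype n]

def fourthMoment (C : Matrix n n ℝ) : Matrix n n ℝ :=
  of fun i j => ∫ ω, x ω i * (x ω ⬝ᵥ C *ᵥ x ω) * x ω j ∂μ

/-- `𝔼[(I - γ x xᵀ) C (I - γ x xᵀ)]`. -/
def sgdStep (γ : ℝ) (C : Matrix n n ℝ) : Matrix n n ℝ :=
  C - γ • (secondMoment μ x * C + C * secondMoment μ x) + γ ^ 2 • fourthMoment μ x C

variable {μ x}

lemma isHermitian_fourthMoment (C : Matrix n n ℝ) : (fourthMoment μ x C).IsHermitian :=
  IsHermitian.ext fun i j => by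
    simp only [fourthMoment, of_apply, star_trivial]
    congr 1 with ω
    ring

lemma fourthMoment_smul (c : ℝ) (C : Matrix n n ℝ) :
    fourthMoment μ x (c • C) = c • fourthMoment μ x C := by
  ext i j
  simp only [fourthMoment, of_apply, Matrix.smul_apply, smul_eq_mul, smul_mulVec,
    dotProduct_smul, ← integral_const_mul]
  congr 1 with ω
  ring

lemma fourthMoment_sub {A B : Matrix n n ℝ}
    (hA : ∀ i j, Integrable (fun ω => x ω i * (x ω ⬝ᵥ A *ᵥ x ω) * x ω j) μ)
    (hB : ∀ i j, Integrable (fun ω => x ω i * (x ω ⬝ᵥ B *ᵥ x ω) * x ω j) μ) :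
    fourthMoment μ x (A - B) = fourthMoment μ x A - fourthMoment μ x B := by
  ext i j
  simp only [fourthMoment, of_apply, Matrix.sub_apply, ← integral_sub (hA i j) (hB i j)]
  congr 1 with ω
  simp only [sub_mulVec, dotProduct_sub]
  ring

lemma dotProduct_secondMoment_mulVec (h2 : ∀ i j, Integrable (fun ω => x ω i * x ω j) μ)
    (u w : n → ℝ) :
    u ⬝ᵥ secondMoment μ x *ᵥ w = ∫ ω, (u ⬝ᵥ x ω) * (x ω ⬝ᵥ w) ∂μ := by
  simp only [← dotProduct_vecMulVec_mulVec]
  exact dotProduct_integral_mulVec (F := fun ω => vecMulVec (x ω) (x ω)) h2 u w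

lemma posSemidef_secondMoment (h2 : ∀ i j, Integrable (fun ω => x ω i * x ω j) μ) :
    (secondMoment μ x).PosSemidef := by
  refine .of_dotProduct_mulVec_nonneg (isHermitian_secondMoment μ x) fun v => ?_
  rw [star_trivial, dotProduct_secondMoment_mulVec h2]
  refine integral_nonneg fun ω => ?_
  rw [Pi.zero_apply, dotProduct_comm (x ω) v]
  exact mul_self_nonneg _

lemma isHermitian_sgdStep {C : Matrix n n ℝ} (hC : C.IsHermitian) (γ : ℝ) :
    (sgdStep μ x γ C).IsHermitian := by
  have hGC : (secondMoment μ x * C + C * secondMoment μ x).IsHermitian := by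
    rw [IsHermitian, conjTranspose_add, conjTranspose_mul, conjTranspose_mul, hC.eq,
      (isHermitian_secondMoment μ x).eq, add_comm]
  exact (hC.sub (hGC.smul (.all γ))).add ((isHermitian_fourthMoment C).smul (.all _))

lemma dotProduct_fourthMoment_mulVec {C : Matrix n n ℝ}
    (h4 : ∀ i j, Integrable (fun ω => x ω i * (x ω ⬝ᵥ C *ᵥ x ω) * x ω j) μ) (v : n → ℝ) :
    v ⬝ᵥ fourthMoment μ x C *ᵥ v = ∫ ω, (x ω ⬝ᵥ C *ᵥ x ω) * ((v ⬝ᵥ x ω) * (x ω ⬝ᵥ v)) ∂μ := by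
  simp only [← dotProduct_of_mul_mul_mulVec]
  exact dotProduct_integral_mulVec
    (F := fun ω => of fun i j => x ω i * (x ω ⬝ᵥ C *ᵥ x ω) * x ω j) h4 v v

lemma dotProduct_sgdStep_mulVec [IsProbabilityMeasure μ]
    (h2 : ∀ i j, Integrable (fun ω => x ω i * x ω j) μ) {C : Matrix n n ℝ} (hC : C.IsSymm)
    (h4 : ∀ i j, Integrable (fun ω => x ω i * (x ω ⬝ᵥ C *ᵥ x ω) * x ω j) μ) (γ : ℝ)
    (v : n → ℝ) :
    v ⬝ᵥ sgdStep μ x γ C *ᵥ v =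
      ∫ ω, (v - (γ * (v ⬝ᵥ x ω)) • x ω) ⬝ᵥ C *ᵥ (v - (γ * (v ⬝ᵥ x ω)) • x ω) ∂μ := by
  set G := secondMoment μ x
  have hCG : v ⬝ᵥ (C * G) *ᵥ v = v ⬝ᵥ (G * C) *ᵥ v := by
    rw [← dotProduct_transpose_mulVec, transpose_mul, hC.eq,
      (isHermitian_iff_isSymm.mp (isHermitian_secondMoment μ x)).eq]
  have hGC : v ⬝ᵥ (G * C) *ᵥ v = ∫ ω, (v ⬝ᵥ x ω) * (x ω ⬝ᵥ C *ᵥ v) ∂μ := by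
    rw [← mulVec_mulVec, dotProduct_secondMoment_mulVec h2]
  have hM := dotProduct_fourthMoment_mulVec h4 v
  have hGC_int : Integrable (fun ω => (v ⬝ᵥ x ω) * (x ω ⬝ᵥ C *ᵥ v)) μ := by
    simpa only [dotProduct_vecMulVec_mulVec] using
      integrable_dotProduct_mulVec (F := fun ω => vecMulVec (x ω) (x ω)) h2 v (C *ᵥ v)
  have hM_int : Integrable (fun ω => (x ω ⬝ᵥ C *ᵥ x ω) * ((v ⬝ᵥ x ω) * (x ω ⬝ᵥ v))) μ := by
    simpa only [dotProduct_of_mul_mul_mulVec] using integrable_dotProduct_mulVec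
      (F := fun ω => of fun i j => x ω i * (x ω ⬝ᵥ C *ᵥ x ω) * x ω j) h4 v v
  calc v ⬝ᵥ sgdStep μ x γ C *ᵥ v
      = v ⬝ᵥ C *ᵥ v - 2 * γ * ∫ ω, (v ⬝ᵥ x ω) * (x ω ⬝ᵥ C *ᵥ v) ∂μ
          + γ ^ 2 * ∫ ω, (x ω ⬝ᵥ C *ᵥ x ω) * ((v ⬝ᵥ x ω) * (x ω ⬝ᵥ v)) ∂μ := by
        simp only [sgdStep, add_mulVec, sub_mulVec, smul_mulVec, dotProduct_add,
          dotProduct_sub, dotProduct_smul, smul_eq_mul]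
        rw [hCG, hGC, hM]
        ring
    _ = ∫ ω, (v ⬝ᵥ C *ᵥ v - 2 * γ * ((v ⬝ᵥ x ω) * (x ω ⬝ᵥ C *ᵥ v))
          + γ ^ 2 * ((x ω ⬝ᵥ C *ᵥ x ω) * ((v ⬝ᵥ x ω) * (x ω ⬝ᵥ v)))) ∂μ := by
        have hconst_int : Integrable
            (fun ω => v ⬝ᵥ C *ᵥ v - 2 * γ * ((v ⬝ᵥ x ω) * (x ω ⬝ᵥ C *ᵥ v))) μ :=
          (integrable_const _).sub (hGC_int.const_mul _)
        rw [integral_add hconst_int (hM_int.const_mul _),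
          integral_sub (integrable_const _) (hGC_int.const_mul _), integral_const,
          integral_const_mul, integral_const_mul, probReal_univ, one_smul]
    _ = _ := by
        congr 1 with ω
        rw [hC.dotProduct_sub_smul_mulVec_sub_smul, hC.dotProduct_mulVec_comm (x ω) v,
          dotProduct_comm (x ω) v]
        ring

lemma posSemidef_sgdStep [IsProbabilityMeasure μ]
    (h2 : ∀ i j, Integrable (fun ω => x ω i * x ω j) μ) {C : Matrix n n ℝ} (hC : C.PosSemidef)
    (h4 : ∀ i j, Integrable (fun ω => x ω i * (x ω ⬝ᵥ C *ᵥ x ω) * x ω j) μ) (γ : ℝ) :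
    (sgdStep μ x γ C).PosSemidef := by
  refine .of_dotProduct_mulVec_nonneg (isHermitian_sgdStep hC.isHermitian γ) fun v => ?_
  rw [star_trivial, dotProduct_sgdStep_mulVec h2 (isHermitian_iff_isSymm.mp hC.isHermitian) h4]
  refine integral_nonneg fun ω => ?_
  simpa only [star_trivial, Pi.zero_apply] using hC.dotProduct_mulVec_nonneg _

lemma fourthMoment_one [DecidableEq n] :
    fourthMoment μ x 1 = of fun i j => ∫ ω, (∑ k, x ω k ^ 2) * (x ω i * x ω j) ∂μ := by
  ext i j
  simp only [fourthMoment, of_apply, one_mulVec, dotProduct, sq]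
  congr 1 with ω
  ring

theorem posSemidef_smul_one_sub_sgdStep_add [DecidableEq n] [IsProbabilityMeasure μ]
    (h2 : ∀ i j, Integrable (fun ω => x ω i * x ω j) μ)
    (h4 : ∀ (A : Matrix n n ℝ) i j,
      Integrable (fun ω => x ω i * (x ω ⬝ᵥ A *ᵥ x ω) * x ω j) μ)
    {R σ γ α : ℝ} {Sig C : Matrix n n ℝ}
    (hfourth : (R ^ 2 • secondMoment μ x - fourthMoment μ x 1).PosSemidef)
    (hSig : (σ ^ 2 • secondMoment μ x - Sig).PosSemidef)
    (hγ : 0 ≤ γ) (hα : 0 ≤ α) (hασ : γ * σ ^ 2 ≤ α * (1 - γ * R ^ 2))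
    (hC : (α • 1 - C).PosSemidef) :
    (α • 1 - (sgdStep μ x γ C + γ ^ 2 • Sig)).PosSemidef := by
  set G := secondMoment μ x
  set c := α * (2 * γ - γ ^ 2 * R ^ 2) - γ ^ 2 * σ ^ 2
  have hc : 0 ≤ c := by nlinarith
  have hM : fourthMoment μ x (α • 1 - C) = α • fourthMoment μ x 1 - fourthMoment μ x C := by
    rw [fourthMoment_sub (h4 _) (h4 _), fourthMoment_smul]
  have hsplit : α • 1 - (sgdStep μ x γ C + γ ^ 2 • Sig) =
      sgdStep μ x γ (α • 1 - C) + γ ^ 2 • (σ ^ 2 • G - Sig)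
        + (α * γ ^ 2) • (R ^ 2 • G - fourthMoment μ x 1) + c • G := by
    simp only [sgdStep, hM, mul_sub, sub_mul, mul_smul_comm, smul_mul_assoc, mul_one, one_mul]
    module
  rw [hsplit]
  exact (((posSemidef_sgdStep h2 hC (h4 _) γ).add (hSig.smul (by positivity))).add
    (hfourth.smul (by positivity))).add ((posSemidef_secondMoment h2).smul hc)

end SGD

theorem stmt5_general {d : ℕ} {Ω : Type*} [MeasurableSpace Ω]
    (μ : Measure Ω) [IsProbabilityMeasure μ]
    (x : Ω → Fin d → ℝ)
    (G : Matrix (Fin d) (Fin d) ℝ)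
    (hG : G = Matrix.of fun i j => ∫ ω, x ω i * x ω j ∂μ)
    (hint2 : ∀ i j, Integrable (fun ω => x ω i * x ω j) μ)
    (hint4 : ∀ (A : Matrix (Fin d) (Fin d) ℝ) i j,
      Integrable (fun ω => x ω i * (x ω ⬝ᵥ A.mulVec (x ω)) * x ω j) μ)
    (R : ℝ)
    (hfourth : ((R ^ 2) • G -
      Matrix.of fun i j => ∫ ω, (∑ k, x ω k ^ 2) * (x ω i * x ω j) ∂μ).PosSemidef)
    (σ : ℝ) (Sig : Matrix (Fin d) (Fin d) ℝ)
    (hSigle : ((σ ^ 2) • G - Sig).PosSemidef)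
    (γ : ℝ) (hγ0 : 0 < γ) (hγR : γ < 1 / R ^ 2)
    (C : ℕ → Matrix (Fin d) (Fin d) ℝ)
    (hC0 : C 0 = 0)
    (hCrec : ∀ t : ℕ, C (t + 1) =
      C t - γ • (G * C t + C t * G) +
        (γ ^ 2) • (Matrix.of fun i j => ∫ ω, x ω i * (x ω ⬝ᵥ (C t).mulVec (x ω)) * x ω j ∂μ) +
        (γ ^ 2) • Sig) :
    ∀ t : ℕ, ((γ * σ ^ 2 / (1 - γ * R ^ 2)) • (1 : Matrix (Fin d) (Fin d) ℝ) - C t).PosSemidef := by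
  subst hG
  have hγR2 : γ * R ^ 2 < 1 := by
    rcases (sq_nonneg R).eq_or_lt with hR | hR
    · simp [← hR]
    · exact (lt_div_iff₀ hR).mp hγR
  have hden : 0 < 1 - γ * R ^ 2 := by linarith
  have hfourth' : (R ^ 2 • secondMoment μ x - fourthMoment μ x 1).PosSemidef := by
    rwa [fourthMoment_one]
  intro t
  induction t with
  | zero => simpa [hC0] using PosSemidef.one.smul (by positivity)
  | succ t ih =>
    rw [hCrec t]
    exact posSemidef_smul_one_sub_sgdStep_add hint2 hint4 hfourth' hSigle hγ0.le
      (by positivity) (div_mul_cancel₀ _ hden.ne').ge ih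

/-- crude bound on the variance iterates of constant-stepsize SGD. -/
theorem stmt5 {d : ℕ} {Ω : Type*} [MeasurableSpace Ω]
    (μ : Measure Ω) [IsProbabilityMeasure μ]
    (x : Ω → Fin d → ℝ)
    (G : Matrix (Fin d) (Fin d) ℝ)
    (hG : G = Matrix.of fun i j => ∫ ω, x ω i * x ω j ∂μ)
    (hint2 : ∀ i j, Integrable (fun ω => x ω i * x ω j) μ)
    (hint4 : ∀ (A : Matrix (Fin d) (Fin d) ℝ) i j,
      Integrable (fun ω => x ω i * (x ω ⬝ᵥ A.mulVec (x ω)) * x ω j) μ)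
    (R : ℝ) (hR : 0 < R)
    (hfourth : ((R ^ 2) • G -
      Matrix.of fun i j => ∫ ω, (∑ k, x ω k ^ 2) * (x ω i * x ω j) ∂μ).PosSemidef)
    (hintR : ∀ i j, Integrable (fun ω => (∑ k, x ω k ^ 2) * (x ω i * x ω j)) μ)
    (σ : ℝ) (Sig : Matrix (Fin d) (Fin d) ℝ) (hSig : Sig.PosSemidef)
    (hSigle : ((σ ^ 2) • G - Sig).PosSemidef)
    (γ : ℝ) (hγ0 : 0 < γ) (hγR : γ < 1 / R ^ 2)
    (C : ℕ → Matrix (Fin d) (Fin d) ℝ)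
    (hC0 : C 0 = 0)
    (hCrec : ∀ t : ℕ, C (t + 1) =
      C t - γ • (G * C t + C t * G) +
        (γ ^ 2) • (Matrix.of fun i j => ∫ ω, x ω i * (x ω ⬝ᵥ (C t).mulVec (x ω)) * x ω j ∂μ) +
        (γ ^ 2) • Sig) :
    ∀ t : ℕ, ((γ * σ ^ 2 / (1 - γ * R ^ 2)) • (1 : Matrix (Fin d) (Fin d) ℝ) - C t).PosSemidef :=
  stmt5_general μ x G hG hint2 hint4 R hfourth σ Sig hSigle γ hγ0 hγR C hC0 hCrec
end

section
/- Let $H$ be a symmetric PSD matrix with eigenvalues $\lambda_i$ and orthonormal eigenvectors $v_i$, let $n \geq 1$ and $0 < \gamma$ with $\gamma\lambda_i \leq 1$ for all $i$, and let $K = \{i : \lambda_i \geq 1/(n\gamma)\}$. Then $\gamma (I - \tfrac{\gamma}{2} H)^{2n} H \preceq \frac{8}{n^2\gamma}\left(\sum_{i\in K}\frac{1}{\lambda_i}v_iv_i^\top + n^2\gamma^2\sum_{i\notin K}\lambda_i v_iv_i^\top\right)$. -/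
open Finset Matrix

/-!
Everything is diagonal in the orthonormal family `vᵢ`: with `Pᵢ = vᵢ vᵢᵀ` one has
`Pᵢ Pⱼ = δᵢⱼ Pᵢ`, so `(1 - (γ/2) H)^m H = ∑ᵢ λᵢ (1 - γλᵢ/2)^m Pᵢ` and the claimed matrix is
`∑ᵢ cᵢ Pᵢ` for explicit scalars `cᵢ`. It remains to show `cᵢ ≥ 0`, i.e. with `x = γλᵢ ∈ [0, 1]`:
for head directions `x (1 - x/2)^(2n) ≤ 4/(n²x)`, from `(1 - u)^m ≤ e^{-mu} ≤ 1/(mu)`;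
for tail directions simply `x (1 - x/2)^(2n) ≤ x`.
-/

lemma one_sub_pow_le_inv_mul {u : ℝ} (hu : 0 < u) (hu1 : u ≤ 1) {m : ℕ} (hm : m ≠ 0) :
    (1 - u) ^ m ≤ (m * u)⁻¹ := by
  have hmu : 0 < (m : ℝ) * u := by positivity
  calc (1 - u) ^ m = (1 - m * u / m) ^ m := by field_simp
    _ ≤ Real.exp (-(m * u)) :=
      Real.one_sub_div_pow_le_exp_neg (mul_le_of_le_one_right m.cast_nonneg hu1)
    _ = (Real.exp (m * u))⁻¹ := Real.exp_neg _
    _ ≤ (m * u)⁻¹ := by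
      gcongr
      linarith [Real.add_one_le_exp (m * u)]

lemma mul_one_sub_half_pow_two_mul_le {x : ℝ} (hx : 0 < x) (hx2 : x ≤ 2) {n : ℕ} (hn : n ≠ 0) :
    x * (1 - x / 2) ^ (2 * n) ≤ 4 / (n ^ 2 * x) := by
  have hbound : (1 - x / 2) ^ n ≤ 2 / (n * x) := by
    convert one_sub_pow_le_inv_mul (u := x / 2) (by positivity) (by linarith) hn using 1
    field_simp
  have hbase : 0 ≤ (1 - x / 2) ^ n := pow_nonneg (by linarith) n
  calc x * (1 - x / 2) ^ (2 * n) = x * ((1 - x / 2) ^ n) ^ 2 := by rw [pow_mul']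
    _ ≤ x * (2 / (n * x)) ^ 2 := by gcongr
    _ = 4 / (n ^ 2 * x) := by field_simp; ring

lemma mul_one_sub_half_pow_le_self {x : ℝ} (hx : 0 ≤ x) (hx2 : x ≤ 2) (m : ℕ) :
    x * (1 - x / 2) ^ m ≤ x :=
  mul_le_of_le_one_right hx (pow_le_one₀ (by linarith) (by linarith))

section RankOne

variable {ι n R : Type*} [Fintype ι] [DecidableEq ι] [Fintype n] {v : ι → n → R}

lemma sum_smul_vecMulVec_mul_sum_smul_vecMulVec [CommSemiring R]
    (hv : ∀ i j, v i ⬝ᵥ v j = if i = j then 1 else 0) (f g : ι → R) :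
    (∑ i, f i • vecMulVec (v i) (v i)) * (∑ i, g i • vecMulVec (v i) (v i)) =
      ∑ i, (f i * g i) • vecMulVec (v i) (v i) := by
  simp_rw [Finset.sum_mul_sum, smul_mul_smul, vecMulVec_mul_vecMulVec, hv, ite_smul, one_smul,
    zero_smul, apply_ite (vecMulVec _), vecMulVec_zero, smul_ite, smul_zero, Finset.sum_ite_eq,
    Finset.mem_univ, if_true]

lemma one_sub_smul_sum_pow_mul [CommRing R] [DecidableEq n]
    (hv : ∀ i j, v i ⬝ᵥ v j = if i = j then 1 else 0) (a : R) (lam g : ι → R) (m : ℕ) :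
    (1 - a • ∑ i, lam i • vecMulVec (v i) (v i)) ^ m * ∑ i, g i • vecMulVec (v i) (v i) =
      ∑ i, ((1 - a * lam i) ^ m * g i) • vecMulVec (v i) (v i) := by
  induction m with
  | zero => simp
  | succ m ih =>
    rw [pow_succ', mul_assoc, ih, sub_mul, one_mul, smul_mul_assoc,
      sum_smul_vecMulVec_mul_sum_smul_vecMulVec hv, Finset.smul_sum, ← Finset.sum_sub_distrib]
    refine Finset.sum_congr rfl fun i _ => ?_
    rw [smul_smul, ← sub_smul]
    ring_nf

end RankOne

lemma posSemidef_sum_smul_vecMulVec {ι n : Type*} [Fintype ι] [Fintype n] (v : ι → n → ℝ)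
    {c : ι → ℝ} (hc : ∀ i, 0 ≤ c i) : (∑ i, c i • vecMulVec (v i) (v i)).PosSemidef :=
  posSemidef_sum _ fun i _ => (posSemidef_vecMulVec_self_star (v i)).smul (hc i)

lemma sum_filter_smul_add_smul_sum_filter_not_smul {ι M : Type*} [Fintype ι] [AddCommMonoid M]
    [Module ℝ M] (p : ι → Prop) [DecidablePred p] (f g : ι → ℝ) (c : ℝ) (P : ι → M) :
    ∑ i with p i, f i • P i + c • ∑ i with ¬p i, g i • P i =
      ∑ i, (if p i then f i else c * g i) • P i := by
  simp_rw [ite_smul, Finset.sum_ite, Finset.smul_sum, smul_smul]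

theorem stmt11 {d : ℕ} (H : Matrix (Fin d) (Fin d) ℝ)
    (lam : Fin d → ℝ) (v : Fin d → Fin d → ℝ)
    (horth : ∀ i j, v i ⬝ᵥ v j = if i = j then (1 : ℝ) else 0)
    (hdecomp : H = ∑ i, lam i • Matrix.vecMulVec (v i) (v i))
    (hlam : ∀ i, 0 ≤ lam i)
    (γ : ℝ) (hγ : 0 < γ) (hspec : ∀ i, γ * lam i ≤ 1)
    (n : ℕ) (hn : 1 ≤ n) :
    ((8 / ((n : ℝ) ^ 2 * γ)) •
        ((∑ i ∈ Finset.univ.filter (fun i => 1 / ((n : ℝ) * γ) ≤ lam i),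
            (1 / lam i) • Matrix.vecMulVec (v i) (v i)) +
          ((n : ℝ) ^ 2 * γ ^ 2) •
            ∑ i ∈ Finset.univ.filter (fun i => ¬ (1 / ((n : ℝ) * γ) ≤ lam i)),
              lam i • Matrix.vecMulVec (v i) (v i)) -
      γ • (((1 : Matrix (Fin d) (Fin d) ℝ) - (γ / 2) • H) ^ (2 * n) * H)).PosSemidef := by
  have hn0 : n ≠ 0 := Nat.one_le_iff_ne_zero.mp hn
  rw [sum_filter_smul_add_smul_sum_filter_not_smul, hdecomp,
    one_sub_smul_sum_pow_mul horth, Finset.smul_sum, Finset.smul_sum, ← Finset.sum_sub_distrib]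
  simp_rw [smul_smul, ← sub_smul]
  refine posSemidef_sum_smul_vecMulVec v fun i => sub_nonneg.mpr ?_
  rw [show γ * ((1 - γ / 2 * lam i) ^ (2 * n) * lam i) =
    γ * lam i * (1 - γ * lam i / 2) ^ (2 * n) by ring]
  split_ifs with hK
  · have hlam_pos : 0 < lam i := (by positivity : (0 : ℝ) < 1 / (n * γ)).trans_le hK
    calc γ * lam i * (1 - γ * lam i / 2) ^ (2 * n) ≤ 4 / (n ^ 2 * (γ * lam i)) :=
          mul_one_sub_half_pow_two_mul_le (by positivity) (by linarith [hspec i]) hn0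
      _ ≤ 8 / (n ^ 2 * γ) * (1 / lam i) := by
          rw [div_mul_div_comm, mul_one, mul_assoc]
          gcongr
          norm_num
  · calc γ * lam i * (1 - γ * lam i / 2) ^ (2 * n) ≤ γ * lam i :=
          mul_one_sub_half_pow_le_self (by positivity [hlam i]) (by linarith [hspec i]) _
      _ ≤ 8 * (γ * lam i) := by linarith [mul_nonneg hγ.le (hlam i)]
      _ = 8 / (n ^ 2 * γ) * (n ^ 2 * γ ^ 2 * lam i) := by field_simp
end
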